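/- Let H₁,...,H_m be structure matrices of graphs Ḡ₁,...,Ḡ_m that are jointly connected, and let τ₁,...,τ_m be positive reals with Σᵢ τᵢ = 1. Then every eigenvalue of Σᵢ τᵢ Hᵢ has strictly positive real part. -/

import Mathlib

/-!
Let `H = L + D` be the structure matrix of a leader–follower graph with nonnegative weights. A
positive combination `∑ τₖ Hₖ` is again such a matrix, for the union graph. If `H v = μ v` with
`v ≠ 0` and `Re μ ≤ 0`, then, since `Re (cᵢ - μ) ≥ cᵢ` for the diagonal entry `cᵢ = (L + D)ᵢᵢ`,
the triangle inequality gives `H |v| ≤ 0` entrywise. By a discrete maximum principle, at an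
entry where `|v|` is maximal and positive, `D` vanishes and every in-neighbour is maximal as
well; so the maximal entries are unreachable from the leader, contradicting connectivity.
-/

open Matrix Finset

section

variable {n R : Type*}

/-- The graph `Ḡ` on the leader `none` and the followers `some i`: there is an edge from `some j`
to `some i` when follower `i` receives information from `j` (`A i j ≠ 0`), and from the leader to
`some i` when `i` is pinned (`D i ≠ 0`). -/
def leaderFollowerAdj [Zero R] (A : Matrix n n R) (D : n → R) : Option n → Option n → Prop
  | none, some i => D i ≠ 0
  | some j, some i => A i j ≠ 0
  | _, none => False

theorem leaderFollowerAdj_sum_smul_of_exists {ι : Type*} {s : Finset ι} {τ : ι → ℝ}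
    {A : ι → Matrix n n ℝ} {D : ι → n → ℝ} (hτ : ∀ k ∈ s, 0 < τ k)
    (hA : ∀ k ∈ s, ∀ i j, 0 ≤ A k i j) (hD : ∀ k ∈ s, 0 ≤ D k) {u v : Option n}
    (h : ∃ k ∈ s, leaderFollowerAdj (A k) (D k) u v) :
    leaderFollowerAdj (∑ k ∈ s, τ k • A k) (∑ k ∈ s, τ k • D k) u v := by
  obtain ⟨k, hk, huv⟩ := h
  match u, v, huv with
  | none, some i, huv =>
    simp only [leaderFollowerAdj, Finset.sum_apply, Pi.smul_apply, smul_eq_mul] at huv ⊢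
    exact (sum_pos' (fun l hl => mul_nonneg (hτ l hl).le (hD l hl i))
      ⟨k, hk, mul_pos (hτ k hk) ((hD k hk i).lt_of_ne' huv)⟩).ne'
  | some j, some i, huv =>
    simp only [leaderFollowerAdj, Matrix.sum_apply, Matrix.smul_apply, smul_eq_mul] at huv ⊢
    exact (sum_pos' (fun l hl => mul_nonneg (hτ l hl).le (hA l hl i j))
      ⟨k, hk, mul_pos (hτ k hk) ((hA k hk i j).lt_of_ne' huv)⟩).ne'

theorem not_of_reflTransGen_leaderFollowerAdj [Zero R] {A : Matrix n n R} {D : n → R}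
    {P : n → Prop} (hD : ∀ i, P i → D i = 0) (hA : ∀ i j, P i → A i j ≠ 0 → P j)
    {u : Option n} (hu : Relation.ReflTransGen (leaderFollowerAdj A D) none u) :
    ∀ i ∈ u, ¬ P i := by
  induction hu with
  | refl => simp
  | @tail b c _ hbc ih =>
    rintro i rfl hi
    match b, hbc with
    | none, hbc => exact hbc (hD i hi)
    | some j, hbc => exact ih j rfl (hA i j hi hbc)

variable [Fintype n] [DecidableEq n]

theorem Matrix.exists_mulVec_eq_smul_of_mem_spectrum {K : Type*} [Field K] {M : Matrix n n K}
    {μ : K} (h : μ ∈ spectrum K M) : ∃ v ≠ 0, M *ᵥ v = μ • v := by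
  rw [← spectrum_toLin', ← Module.End.hasEigenvalue_iff_mem_spectrum] at h
  obtain ⟨v, hv⟩ := h.exists_hasEigenvector
  exact ⟨v, hv.2, by simpa using Module.End.mem_eigenspace_iff.1 hv.1⟩

/-- The paper's `H = L + D`, with `L` the Laplacian of the weighted follower graph `A` and `D`
the pinning gains. -/
def structureMatrix [Ring R] (A : Matrix n n R) (D : n → R) : Matrix n n R :=
  diagonal (fun i => ∑ j ∈ univ.erase i, A i j) - A + diagonal D

theorem structureMatrix_sum_smul [CommRing R] {ι : Type*} (s : Finset ι) (c : ι → R)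
    (A : ι → Matrix n n R) (D : ι → n → R) :
    ∑ k ∈ s, c k • structureMatrix (A k) (D k) =
      structureMatrix (∑ k ∈ s, c k • A k) (∑ k ∈ s, c k • D k) := by
  ext i j
  simp only [structureMatrix, Matrix.sum_apply, Finset.sum_apply, Matrix.add_apply,
    Matrix.sub_apply, Matrix.smul_apply, diagonal_apply, smul_eq_mul, mul_add, mul_sub,
    Finset.sum_add_distrib, Finset.sum_sub_distrib]
  split_ifs
  · simp only [Finset.mul_sum, Pi.smul_apply, smul_eq_mul]
    rw [Finset.sum_comm]
  · simp

theorem structureMatrix_map [Ring R] {S : Type*} [Ring S] (f : R →+* S) (A : Matrix n n R)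
    (D : n → R) : (structureMatrix A D).map f = structureMatrix (A.map f) (f ∘ D) := by
  ext i j
  rcases eq_or_ne i j with rfl | hij
  · simp [structureMatrix]
  · simp [structureMatrix, diagonal_apply_ne _ hij]

theorem structureMatrix_mulVec_apply [CommRing R] (A : Matrix n n R) (D : n → R) (v : n → R)
    (i : n) : (structureMatrix A D *ᵥ v) i =
      (∑ j ∈ univ.erase i, A i j + D i) * v i - ∑ j, A i j * v j := by
  simp only [structureMatrix, add_mulVec, sub_mulVec, mulVec_diagonal, Pi.add_apply,
    Pi.sub_apply]
  simp only [mulVec, dotProduct]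
  ring

theorem structureMatrix_mulVec_norm_nonpos {A : Matrix n n ℝ} {D : n → ℝ}
    (hA : ∀ i j, 0 ≤ A i j) {v : n → ℂ} {μ : ℂ}
    (hv : (structureMatrix A D).map Complex.ofReal *ᵥ v = μ • v) (hμ : μ.re ≤ 0) :
    structureMatrix A D *ᵥ (fun i => ‖v i‖) ≤ 0 := by
  intro i
  set c := ∑ j ∈ univ.erase i, A i j + D i
  have hrow : ((c : ℂ) - μ) * v i = ∑ j, (A i j : ℂ) * v j := by
    have h := congrFun hv i
    rw [show (structureMatrix A D).map Complex.ofReal =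
        structureMatrix (A.map Complex.ofRealHom) (Complex.ofRealHom ∘ D) from
      structureMatrix_map Complex.ofRealHom A D, structureMatrix_mulVec_apply] at h
    simp only [map_apply, Complex.ofRealHom_eq_coe, Function.comp_apply, Pi.smul_apply,
      smul_eq_mul] at h
    push_cast [c]
    linear_combination h
  have hc : c ≤ ‖(c : ℂ) - μ‖ :=
    calc c ≤ ((c : ℂ) - μ).re := by simpa using hμ
      _ ≤ ‖(c : ℂ) - μ‖ := Complex.re_le_norm _
  calc (structureMatrix A D *ᵥ fun i => ‖v i‖) i
      = c * ‖v i‖ - ∑ j, A i j * ‖v j‖ := structureMatrix_mulVec_apply _ _ _ _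
    _ ≤ ‖(c : ℂ) - μ‖ * ‖v i‖ - ‖∑ j, (A i j : ℂ) * v j‖ := by
      gcongr
      refine (norm_sum_le _ _).trans_eq (sum_congr rfl fun j _ => ?_)
      rw [norm_mul, Complex.norm_real, Real.norm_of_nonneg (hA i j)]
    _ = 0 := by rw [← norm_mul, hrow, sub_self]

theorem structureMatrix_max_propagates {A : Matrix n n ℝ} {D : n → ℝ} (hA : ∀ i j, 0 ≤ A i j)
    (hA0 : ∀ i, A i i = 0) (hD : 0 ≤ D) {w : n → ℝ} (hw : structureMatrix A D *ᵥ w ≤ 0)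
    {i : n} (hmax : ∀ j, w j ≤ w i) (hpos : 0 < w i) :
    D i = 0 ∧ ∀ j, A i j ≠ 0 → w j = w i := by
  have hterm : ∀ j ∈ univ, 0 ≤ A i j * (w i - w j) :=
    fun j _ => mul_nonneg (hA i j) (sub_nonneg.2 (hmax j))
  have hsum : ∑ j, A i j * (w i - w j) + D i * w i ≤ 0 := by
    have hrow := hw i
    rw [structureMatrix_mulVec_apply, sum_erase _ (hA0 i)] at hrow
    simp only [mul_sub, sum_sub_distrib, ← sum_mul]
    simp only [Pi.zero_apply, add_mul] at hrow
    linarith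
  have hDw := mul_nonneg (hD i) hpos.le
  have hsum0 := (sum_eq_zero_iff_of_nonneg hterm).1 (by linarith [sum_nonneg hterm])
  refine ⟨(mul_eq_zero.1 (by linarith [sum_nonneg hterm])).resolve_right hpos.ne', fun j hj => ?_⟩
  linarith [(mul_eq_zero.1 (hsum0 j (mem_univ j))).resolve_left hj]

theorem nonpos_of_structureMatrix_mulVec_nonpos {A : Matrix n n ℝ} {D : n → ℝ}
    (hA : ∀ i j, 0 ≤ A i j) (hA0 : ∀ i, A i i = 0) (hD : 0 ≤ D)
    (hreach : ∀ i, Relation.ReflTransGen (leaderFollowerAdj A D) none (some i)) {w : n → ℝ}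
    (hw : structureMatrix A D *ᵥ w ≤ 0) : w ≤ 0 := by
  intro i
  by_contra! hi
  obtain ⟨i₀, -, hi₀⟩ := exists_max_image univ w ⟨i, mem_univ i⟩
  have hP : ∀ j, w j = w i₀ → D j = 0 ∧ ∀ k, A j k ≠ 0 → w k = w i₀ := fun j hj => by
    obtain ⟨hDj, hAj⟩ := structureMatrix_max_propagates hA hA0 hD hw
      (fun k => hj ▸ hi₀ k (mem_univ k)) (hj ▸ hi.trans_le (hi₀ i (mem_univ i)))
    exact ⟨hDj, fun k hk => (hAj k hk).trans hj⟩
  exact not_of_reflTransGen_leaderFollowerAdj (fun j hj => (hP j hj).1)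
    (fun j k hj => (hP j hj).2 k) (hreach i₀) i₀ rfl rfl

theorem re_pos_of_mem_spectrum_structureMatrix {A : Matrix n n ℝ} {D : n → ℝ}
    (hA : ∀ i j, 0 ≤ A i j) (hA0 : ∀ i, A i i = 0) (hD : 0 ≤ D)
    (hreach : ∀ i, Relation.ReflTransGen (leaderFollowerAdj A D) none (some i)) {μ : ℂ}
    (hμ : μ ∈ spectrum ℂ ((structureMatrix A D).map Complex.ofReal)) : 0 < μ.re := by
  by_contra! hre
  obtain ⟨v, hv0, hv⟩ := exists_mulVec_eq_smul_of_mem_spectrum hμ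
  have hw := nonpos_of_structureMatrix_mulVec_nonpos hA hA0 hD hreach
    (structureMatrix_mulVec_norm_nonpos hA hv hre)
  exact hv0 (funext fun i => norm_le_zero_iff.1 (hw i))

theorem re_pos_of_mem_spectrum_sum_smul_structureMatrix {ι : Type*} (s : Finset ι)
    {τ : ι → ℝ} {A : ι → Matrix n n ℝ} {D : ι → n → ℝ} (hτ : ∀ k ∈ s, 0 < τ k)
    (hA : ∀ k ∈ s, ∀ i j, 0 ≤ A k i j) (hA0 : ∀ k ∈ s, ∀ i, A k i i = 0)
    (hD : ∀ k ∈ s, 0 ≤ D k)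
    (hreach : ∀ i, Relation.ReflTransGen
      (fun u v => ∃ k ∈ s, leaderFollowerAdj (A k) (D k) u v) none (some i)) {μ : ℂ}
    (hμ : μ ∈ spectrum ℂ ((∑ k ∈ s, τ k • structureMatrix (A k) (D k)).map Complex.ofReal)) :
    0 < μ.re := by
  rw [structureMatrix_sum_smul] at hμ
  refine re_pos_of_mem_spectrum_structureMatrix (fun i j => ?_) (fun i => ?_) ?_
    (fun i => Relation.ReflTransGen.mono (fun _ _ => leaderFollowerAdj_sum_smul_of_exists hτ hA hD)
      _ _ (hreach i)) hμ
  · rw [Matrix.sum_apply]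
    exact sum_nonneg fun k hk => smul_nonneg (hτ k hk).le (hA k hk i j)
  · rw [Matrix.sum_apply]
    exact sum_eq_zero fun k hk => by simp [hA0 k hk i]
  · exact sum_nonneg fun k hk => smul_nonneg (hτ k hk).le (hD k hk)

end

theorem convex_combination_structure_matrices_spectrum_pos_re {N m : ℕ}
    (a : Fin m → Fin N → Fin N → ℝ) (ha : ∀ k i j, a k i j = 0 ∨ a k i j = 1)
    (ha0 : ∀ k i, a k i i = 0)
    (d : Fin m → Fin N → ℝ) (hd : ∀ k i, d k i = 0 ∨ d k i = 1)
    (hconn : ∀ i : Fin N,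
      Relation.ReflTransGen
        (fun u v : Option (Fin N) =>
          match u, v with
          | none, some i => ∃ k, d k i = 1
          | some j, some i => ∃ k, a k i j = 1
          | _, none => False)
        none (some i))
    (τ : Fin m → ℝ) (hτpos : ∀ k, 0 < τ k) :
    ∀ μ ∈ spectrum ℂ
      ((∑ k : Fin m,
          τ k • (Matrix.diagonal (fun i => ∑ j ∈ Finset.univ.erase i, a k i j) - Matrix.of (a k)
            + Matrix.diagonal (d k))).map (Complex.ofReal)),
      0 < μ.re := by
  have ha' : ∀ k i j, 0 ≤ a k i j := fun k i j => (ha k i j).elim (·.ge) (·.symm ▸ zero_le_one)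
  have hd' : ∀ k i, 0 ≤ d k i := fun k i => (hd k i).elim (·.ge) (·.symm ▸ zero_le_one)
  intro μ hμ
  refine re_pos_of_mem_spectrum_sum_smul_structureMatrix univ (A := fun k => of (a k)) (D := d)
    (fun k _ => hτpos k) (fun k _ => ha' k) (fun k _ => ha0 k) (fun k _ => hd' k)
    (fun i => Relation.ReflTransGen.mono (fun u v huv => ?_) _ _ (hconn i)) hμ
  match u, v, huv with
  | none, some i, ⟨k, hk⟩ => exact ⟨k, mem_univ k, by simp [leaderFollowerAdj, hk]⟩
  | some j, some i, ⟨k, hk⟩ => exact ⟨k, mem_univ k, by simp [leaderFollowerAdj, hk]⟩
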